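/- arXiv:1307.1737 — 2 statements merged into one kernel-verified Lean document; each statement's English description precedes it below -/
import Mathlib

section
/- Let X be a compact metric space and f : X → X a continuous map. If R ⊆ X is a repeller for f and R' ⊆ R is a repeller for the restricted system f|_R : R → R (with the subspace topology on the compact set R), then R' is a repeller for f on X. -/
/-!
Replace each repelling region by a closed one with the same `Inv⁺`: then `R = ⋂ₙ f⁻ⁿ N` with
`N` closed and `f⁻ᵖ N ⊆ int N`, and `R' = ⋂ₙ f⁻ⁿ V` with `V ⊆ R` closed and `R ∩ f⁻ᵐ V` inside
the interior of `V` relative to `R`. Thicken `V` off `R` to a closed `S = V ∪ cl O'` with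
`R ∩ S = V` that is a neighbourhood of `R ∩ f⁻ᵐ V`. Since `⋂_T f⁻ᵀ N = R`, compactness gives
`f⁻ᵀ N ∩ f⁻ᵐ S ⊆ int S` for some `T`. This inclusion makes `C = f⁻ᵀ N ∩ ⋂_{j<m} f⁻ʲ S`
backward invariant with `f⁻⁽ᵖ⁺ᵐ⁾ C ⊆ int C`, and `Inv⁺ C = Inv⁺ (N ∩ S) = R'`.
-/

open Set

/-- The maximal invariant set in `U`: the union of all subsets `S ⊆ U` with `f '' S = S`. -/
def MaxInv {Y : Type*} (f : Y → Y) (U : Set Y) : Set Y :=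
  ⋃₀ {S : Set Y | S ⊆ U ∧ f '' S = S}

/-- The maximal forward invariant set in `U`: the union of all subsets `S ⊆ U`
with `f '' S ⊆ S`. -/
def MaxInvPlus {Y : Type*} (f : Y → Y) (U : Set Y) : Set Y :=
  ⋃₀ {S : Set Y | S ⊆ U ∧ f '' S ⊆ S}

/-- The omega-limit set `ω(U) = ⋂_{n ≥ 0} cl (⋃_{m ≥ n} f^[m] '' U)`. -/
def OmegaLim {Y : Type*} [TopologicalSpace Y] (f : Y → Y) (U : Set Y) : Set Y :=
  ⋂ n : ℕ, closure (⋃ m ≥ n, f^[m] '' U)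

/-- The alpha-limit set `α(U) = ⋂_{n ≥ 0} cl (⋃_{m ≥ n} (f^[m]) ⁻¹' U)`. -/
def AlphaLim {Y : Type*} [TopologicalSpace Y] (f : Y → Y) (U : Set Y) : Set Y :=
  ⋂ n : ℕ, closure (⋃ m ≥ n, f^[m] ⁻¹' U)

/-- A trapping region: a forward invariant set `U` with `f^[n] '' cl U ⊆ int U`
for some `n ≥ 1`. -/
def IsTrappingRegion {Y : Type*} [TopologicalSpace Y] (f : Y → Y) (U : Set Y) : Prop :=
  f '' U ⊆ U ∧ ∃ n : ℕ, 1 ≤ n ∧ f^[n] '' closure U ⊆ interior U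

/-- An attractor: `A = Inv(U)` for some trapping region `U`. -/
def IsAttractor {Y : Type*} [TopologicalSpace Y] (f : Y → Y) (A : Set Y) : Prop :=
  ∃ U : Set Y, IsTrappingRegion f U ∧ A = MaxInv f U

/-- An attracting neighborhood: `ω(U) ⊆ int U`. -/
def IsAttractingNbhd {Y : Type*} [TopologicalSpace Y] (f : Y → Y) (U : Set Y) : Prop :=
  OmegaLim f U ⊆ interior U

/-- A repelling region: a backward invariant set `U` with `(f^[n]) ⁻¹' cl U ⊆ int U`
for some `n ≥ 1`. -/
def IsRepellingRegion {Y : Type*} [TopologicalSpace Y] (f : Y → Y) (U : Set Y) : Prop :=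
  f ⁻¹' U ⊆ U ∧ ∃ n : ℕ, 1 ≤ n ∧ f^[n] ⁻¹' closure U ⊆ interior U

/-- A repeller: `R = Inv⁺(U)` for some repelling region `U`. -/
def IsRepeller {Y : Type*} [TopologicalSpace Y] (f : Y → Y) (R : Set Y) : Prop :=
  ∃ U : Set Y, IsRepellingRegion f U ∧ R = MaxInvPlus f U

/-- A repelling neighborhood: `α(U) ⊆ int U`. -/
def IsRepellingNbhd {Y : Type*} [TopologicalSpace Y] (f : Y → Y) (U : Set Y) : Prop :=
  AlphaLim f U ⊆ interior U

/-- A backward orbit: a sequence `γ : ℕ → Y` with `f (γ (k+1)) = γ k` for all `k`.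
A backward orbit through `x` additionally satisfies `γ 0 = x`. -/
def IsBackwardOrbit {Y : Type*} (f : Y → Y) (γ : ℕ → Y) : Prop :=
  ∀ k : ℕ, f (γ (k + 1)) = γ k

/-- The orbital alpha-limit set `α_o(γ) = ⋂_{n ≥ 0} cl {γ m : m ≥ n}`. -/
def OrbAlpha {Y : Type*} [TopologicalSpace Y] (γ : ℕ → Y) : Set Y :=
  ⋂ n : ℕ, closure (γ '' {m : ℕ | n ≤ m})

/-- The dual repeller of an attractor `A`: `A* = {x : ω(x) ∩ A = ∅}`. -/
def DualRepeller {Y : Type*} [TopologicalSpace Y] (f : Y → Y) (A : Set Y) : Set Y :=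
  {x : Y | OmegaLim f {x} ∩ A = ∅}

/-- The dual attractor of a repeller `R`:
`R* = {x : ∃ backward orbit γ through x with α_o(γ) ∩ R = ∅}`. -/
def DualAttractor {Y : Type*} [TopologicalSpace Y] (f : Y → Y) (R : Set Y) : Set Y :=
  {x : Y | ∃ γ : ℕ → Y, γ 0 = x ∧ IsBackwardOrbit f γ ∧ OrbAlpha γ ∩ R = ∅}

open Function

section MaxInvPlus

variable {Y : Type*} {f : Y → Y}

theorem mem_maxInvPlus_iff {W : Set Y} {x : Y} :
    x ∈ MaxInvPlus f W ↔ ∀ n, f^[n] x ∈ W := by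
  constructor
  · rintro ⟨S, ⟨hSW, hSf⟩, hxS⟩ n
    refine hSW ?_
    induction n with
    | zero => exact hxS
    | succ n ih => exact iterate_succ_apply' f n x ▸ hSf (mem_image_of_mem f ih)
  · intro hx
    refine ⟨{y | ∀ n, f^[n] y ∈ W}, ⟨fun y hy => hy 0, ?_⟩, hx⟩
    rintro _ ⟨y, hy, rfl⟩ n
    exact iterate_succ_apply f n y ▸ hy (n + 1)

theorem maxInvPlus_mono {W W' : Set Y} (h : W ⊆ W') : MaxInvPlus f W ⊆ MaxInvPlus f W' :=
  fun _ hx => mem_maxInvPlus_iff.2 fun n => h (mem_maxInvPlus_iff.1 hx n)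

theorem maxInvPlus_subset (W : Set Y) : MaxInvPlus f W ⊆ W :=
  fun _ hx => mem_maxInvPlus_iff.1 hx 0

theorem mapsTo_iterate_maxInvPlus (W : Set Y) (n : ℕ) :
    MapsTo f^[n] (MaxInvPlus f W) (MaxInvPlus f W) := fun x hx =>
  mem_maxInvPlus_iff.2 fun k => iterate_add_apply f k n x ▸ mem_maxInvPlus_iff.1 hx (k + n)

theorem image_val_maxInvPlus_restrict {R : Set Y} (hmaps : MapsTo f R R) (V : Set R) :
    Subtype.val '' MaxInvPlus (hmaps.restrict f R R) V = MaxInvPlus f (Subtype.val '' V) := by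
  ext x
  simp only [mem_maxInvPlus_iff, mem_image]
  constructor
  · rintro ⟨ξ, hξ, rfl⟩ n
    exact ⟨_, hξ n, hmaps.coe_iterate_restrict ξ n⟩
  · intro hx
    obtain ⟨ξ, -, rfl⟩ := hx 0
    refine ⟨ξ, fun n => ?_, rfl⟩
    obtain ⟨η, hη, hηξ⟩ := hx n
    rw [← hmaps.coe_iterate_restrict, Subtype.val_inj] at hηξ
    exact hηξ ▸ hη

theorem antitone_preimage_iterate {A : Set Y} (hA : f ⁻¹' A ⊆ A) :
    Antitone fun n => f^[n] ⁻¹' A :=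
  antitone_nat_of_succ_le fun n => by
    simp only [iterate_succ', preimage_comp]
    exact preimage_mono hA

theorem maxInvPlus_preimage_iterate_inter_biInter {N : Set Y} (hN : f ⁻¹' N ⊆ N) (S : Set Y)
    {m : ℕ} (hm : 1 ≤ m) (T : ℕ) :
    MaxInvPlus f (f^[T] ⁻¹' N ∩ ⋂ j ∈ Iio m, f^[j] ⁻¹' S) = MaxInvPlus f (N ∩ S) := by
  ext x
  simp only [mem_maxInvPlus_iff, mem_inter_iff, mem_preimage, mem_iInter, mem_Iio,
    ← iterate_add_apply]
  constructor
  · intro h n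
    exact ⟨antitone_preimage_iterate hN (Nat.le_add_left n T) (h n).1,
      zero_add n ▸ (h n).2 0 (by omega)⟩
  · intro h n
    exact ⟨(h (T + n)).1, fun j _ => (h (j + n)).2⟩

end MaxInvPlus

section Topology

variable {Y : Type*} [TopologicalSpace Y] {f : Y → Y}

theorem isClosed_maxInvPlus (hf : Continuous f) {N : Set Y} (hN : IsClosed N) :
    IsClosed (MaxInvPlus f N) := by
  have : MaxInvPlus f N = ⋂ n, f^[n] ⁻¹' N := by ext; simp [mem_maxInvPlus_iff]
  exact this ▸ isClosed_iInter fun n => hN.preimage (hf.iterate n)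

theorem IsRepellingRegion.exists_isClosed (hf : Continuous f) {U : Set Y}
    (hU : IsRepellingRegion f U) :
    ∃ N, IsClosed N ∧ IsRepellingRegion f N ∧ MaxInvPlus f N = MaxInvPlus f U := by
  obtain ⟨-, n, hn, hUn⟩ := hU
  have hint : ∀ j x, f^[n + j] x ∈ closure U → f^[j] x ∈ interior U := fun j x h =>
    hUn (by rwa [mem_preimage, ← iterate_add_apply])
  obtain ⟨k, rfl⟩ : ∃ k, n = k + 1 := ⟨n - 1, by omega⟩
  have hNc : IsClosed (⋂ j < k + 1, f^[j] ⁻¹' closure U) :=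
    isClosed_biInter fun j _ => isClosed_closure.preimage (hf.iterate j)
  refine ⟨_, hNc, ⟨?_, k + 1, hn, ?_⟩, ?_⟩
  · intro x hx
    simp only [mem_preimage, mem_iInter] at hx ⊢
    rintro (_ | j) hj
    · exact interior_subset.trans subset_closure (hint 0 x (hx k k.lt_succ_self))
    · exact hx j (by omega)
  · rw [hNc.closure_eq]
    intro x hx
    simp only [mem_preimage, mem_iInter] at hx
    have hopen : IsOpen (⋂ j ∈ Iio (k + 1), f^[j] ⁻¹' interior U) :=
      (finite_Iio _).isOpen_biInter fun j _ => isOpen_interior.preimage (hf.iterate j)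
    refine interior_maximal (iInter₂_mono fun j _ => preimage_mono ?_) hopen ?_
    · exact interior_subset.trans subset_closure
    · simp only [mem_iInter, mem_Iio, mem_preimage]
      intro j hj
      exact hint j x (by rw [add_comm, iterate_add_apply]; exact hx j hj)
  · ext x
    simp only [mem_maxInvPlus_iff, mem_iInter, mem_preimage, ← iterate_add_apply]
    constructor
    · intro h j
      exact interior_subset (hint j x (by simpa using h (k + 1 + j) 0 k.succ_pos))
    · intro h j i _
      exact subset_closure (h (i + j))

theorem isRepellingRegion_preimage_iterate_inter_biInter (hf : Continuous f) {N S : Set Y}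
    (hNc : IsClosed N) (hN : IsRepellingRegion f N) (hSc : IsClosed S) {m T : ℕ} (hm : 1 ≤ m)
    (hT : f^[T] ⁻¹' N ∩ f^[m] ⁻¹' S ⊆ interior S) :
    IsRepellingRegion f (f^[T] ⁻¹' N ∩ ⋂ j ∈ Iio m, f^[j] ⁻¹' S) := by
  obtain ⟨hNb, p, hp, hNp⟩ := hN
  rw [hNc.closure_eq] at hNp
  have hNanti := antitone_preimage_iterate hNb
  set C := f^[T] ⁻¹' N ∩ ⋂ j ∈ Iio m, f^[j] ⁻¹' S
  have hCc : IsClosed C :=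
    (hNc.preimage (hf.iterate T)).inter (isClosed_biInter fun j _ => hSc.preimage (hf.iterate j))
  have hmemC : ∀ y, y ∈ C ↔ f^[T] y ∈ N ∧ ∀ j < m, f^[j] y ∈ S := by simp [C]
  have hCb : f ⁻¹' C ⊆ C := by
    intro y hy
    rw [mem_preimage, hmemC] at hy
    obtain ⟨k, rfl⟩ : ∃ k, m = k + 1 := ⟨m - 1, by omega⟩
    have hTy : f^[T] y ∈ N :=
      hNanti T.le_succ (by rw [mem_preimage, iterate_succ_apply]; exact hy.1)
    refine (hmemC y).2 ⟨hTy, ?_⟩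
    rintro (_ | j) hj
    · refine interior_subset (hT ⟨hTy, ?_⟩)
      rw [mem_preimage, iterate_succ_apply]
      exact hy.2 k k.lt_succ_self
    · rw [iterate_succ_apply]
      exact hy.2 j (by omega)
  have hCanti := antitone_preimage_iterate hCb
  refine ⟨hCb, p + m, by omega, ?_⟩
  rw [hCc.closure_eq]
  intro y hy
  have hp' := (hmemC _).1 (hCanti (Nat.le_add_right p m) hy)
  have hm' := (hmemC _).1 (hCanti (Nat.le_add_left m p) hy)
  have hopen : IsOpen (f^[T] ⁻¹' interior N ∩ ⋂ j ∈ Iio m, f^[j] ⁻¹' interior S) :=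
    (isOpen_interior.preimage (hf.iterate T)).inter
      ((finite_Iio m).isOpen_biInter fun j _ => isOpen_interior.preimage (hf.iterate j))
  refine interior_maximal (inter_subset_inter (preimage_mono interior_subset)
    (iInter₂_mono fun j _ => preimage_mono interior_subset)) hopen ⟨?_, ?_⟩
  · apply hNp
    rw [mem_preimage, ← iterate_add_apply, add_comm, iterate_add_apply]
    exact hp'.1
  · simp only [mem_iInter, mem_Iio, mem_preimage]
    intro j hj
    refine hT ⟨?_, ?_⟩
    · rw [mem_preimage, ← iterate_add_apply]
      refine hNanti (by omega : T + j ≤ T + m) ?_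
      rw [mem_preimage, iterate_add_apply]
      exact hm'.1
    · rw [mem_preimage, ← iterate_add_apply, add_comm, iterate_add_apply]
      exact hm'.2 j hj

theorem exists_isRepellingRegion_maxInvPlus_eq [CompactSpace Y] [RegularSpace Y]
    (hf : Continuous f) {N : Set Y} (hNc : IsClosed N) (hN : IsRepellingRegion f N)
    {V : Set Y} (hVc : IsClosed V) (hVN : V ⊆ MaxInvPlus f N) {m : ℕ} (hm : 1 ≤ m)
    {O : Set Y} (hO : IsOpen O) (hVO : MaxInvPlus f N ∩ f^[m] ⁻¹' V ⊆ O)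
    (hOV : MaxInvPlus f N ∩ O ⊆ V) :
    ∃ C, IsRepellingRegion f C ∧ MaxInvPlus f C = MaxInvPlus f V := by
  set R := MaxInvPlus f N
  have hRc : IsClosed R := isClosed_maxInvPlus hf hNc
  obtain ⟨O', hO'o, hVO', hO'O⟩ := (hRc.inter (hVc.preimage (hf.iterate m))).isCompact
    |>.exists_isOpen_closure_subset (hO.mem_nhdsSet.2 hVO)
  set S := V ∪ closure O'
  have hRS : R ∩ S ⊆ V := by
    rintro x ⟨hxR, hxV | hxO'⟩
    exacts [hxV, hOV ⟨hxR, hO'O hxO'⟩]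
  have hSc : IsClosed S := hVc.union isClosed_closure
  obtain ⟨T, hT⟩ : ∃ T, f^[T] ⁻¹' N ∩ f^[m] ⁻¹' S ⊆ interior S := by
    refine exists_subset_nhds_of_isCompact'
      (Antitone.directed_ge fun _ _ h =>
        inter_subset_inter_left _ (antitone_preimage_iterate hN.1 h))
      (fun T => ((hNc.preimage (hf.iterate T)).inter (hSc.preimage (hf.iterate m))).isCompact)
      (fun T => (hNc.preimage (hf.iterate T)).inter (hSc.preimage (hf.iterate m))) ?_
    intro x hx
    simp only [mem_iInter, mem_inter_iff, mem_preimage] at hx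
    have hxR : x ∈ R := mem_maxInvPlus_iff.2 fun n => (hx n).1
    refine isOpen_interior.mem_nhds (interior_maximal ?_ hO'o (hVO' ⟨hxR, ?_⟩))
    · exact subset_closure.trans subset_union_right
    · exact hRS ⟨mapsTo_iterate_maxInvPlus N m hxR, (hx 0).2⟩
  refine ⟨_, isRepellingRegion_preimage_iterate_inter_biInter hf hNc hN hSc hm hT,
    (maxInvPlus_preimage_iterate_inter_biInter hN.1 S hm T).trans
      (subset_antisymm (fun x hx => ?_) ?_)⟩
  · exact mem_maxInvPlus_iff.2 fun n => hRS ⟨mapsTo_iterate_maxInvPlus _ n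
      (maxInvPlus_mono inter_subset_left hx), (mem_maxInvPlus_iff.1 hx n).2⟩
  · exact maxInvPlus_mono (subset_inter (hVN.trans (maxInvPlus_subset N)) subset_union_left)

theorem exists_isRepellingRegion_maxInvPlus_eq_image_val [CompactSpace Y] [RegularSpace Y]
    (hf : Continuous f) {N : Set Y} (hNc : IsClosed N) (hN : IsRepellingRegion f N)
    {R : Set Y} (hRN : R = MaxInvPlus f N) (hmaps : MapsTo f R R) {V : Set R} (hVc : IsClosed V)
    (hV : IsRepellingRegion (hmaps.restrict f R R) V) :
    ∃ C, IsRepellingRegion f C ∧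
      MaxInvPlus f C = Subtype.val '' MaxInvPlus (hmaps.restrict f R R) V := by
  subst hRN
  obtain ⟨-, m, hm, hVm⟩ := hV
  rw [hVc.closure_eq] at hVm
  obtain ⟨O, hO, hOV⟩ := isOpen_induced_iff.1 (isOpen_interior (s := V))
  rw [image_val_maxInvPlus_restrict]
  refine exists_isRepellingRegion_maxInvPlus_eq hf hNc hN
    ((isClosed_maxInvPlus hf hNc).isClosedMap_subtype_val _ hVc) (by simp) hm hO ?_ ?_
  · rintro x ⟨hxR, ξ, hξ, hξx⟩
    have hx : (hmaps.restrict f _ _)^[m] ⟨x, hxR⟩ ∈ V := by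
      rwa [← Subtype.val_inj.1 (hξx.trans (hmaps.coe_iterate_restrict ⟨x, hxR⟩ m).symm)]
    have hxO := hVm hx
    rwa [← hOV] at hxO
  · rintro x ⟨hxR, hxO⟩
    exact ⟨⟨x, hxR⟩, interior_subset (hOV ▸ hxO : (⟨x, hxR⟩ : _) ∈ interior V), rfl⟩

end Topology

/-- A repeller of the system restricted to a repeller is a
repeller of the full system. -/
theorem repeller_of_restriction_is_repeller
    {X : Type*} [MetricSpace X] [CompactSpace X]
    (f : X → X) (hf : Continuous f) (R R' : Set X)
    (hR : IsRepeller f R) (hmaps : Set.MapsTo f R R) (hsub : R' ⊆ R)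
    (hR' : IsRepeller (Set.MapsTo.restrict f R R hmaps)
      ((Subtype.val : R → X) ⁻¹' R')) :
    IsRepeller f R' := by
  obtain ⟨U, hU, hRU⟩ := hR
  obtain ⟨N, hNc, hN, hNU⟩ := hU.exists_isClosed hf
  obtain ⟨W, hW, hR'W⟩ := hR'
  obtain ⟨V, hVc, hV, hVW⟩ := hW.exists_isClosed (hf.restrict hmaps)
  obtain ⟨C, hC, hCV⟩ :=
    exists_isRepellingRegion_maxInvPlus_eq_image_val hf hNc hN (hRU.trans hNU.symm) hmaps hVc hV
  refine ⟨C, hC, ?_⟩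
  rw [hCV, hVW, ← hR'W, image_preimage_eq_of_subset (by rwa [Subtype.range_val])]
end

section
/- Let X be a compact metric space and f : X → X a continuous map. Let U be a repelling region and R = Inv⁺(U) the associated repeller. Then Inv(X \ U) = {x ∈ X : there exists a backward orbit γ through x with α_o(γ) ∩ R = ∅}; in particular Inv(X \ U) is compact and invariant, and it depends only on R and not on the choice of repelling region U with R = Inv⁺(U). -/
/-!
A point of `Inv(X \ U)` has a backward orbit in `X \ U`, whose orbital alpha-limit set lies in
`cl (X \ U) = X \ int U`, while the repeller lies in `int U` because `f^[n]` maps it into `U`.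
Conversely, backward invariance of `U` means a backward orbit that enters `U` stays in `U`; its
orbital alpha-limit set is then a nonempty forward invariant subset of `cl U`, hence (applying
`f^[n]`) of `U`, hence of the repeller. So a backward orbit with alpha-limit set disjoint from the
repeller avoids `U`, and so does the forward orbit of its base point. The resulting description of
`Inv(X \ U)` mentions only the repeller. Closedness holds because the closure of `Inv(X \ U)` is
again invariant and misses `U`: each of its points is the `f^[n]`-image of a point outside `int U`.
-/

open Set

open Filter Function

section Invariant

variable {Y : Type*} {f : Y → Y}

lemma maxInv_subset (f : Y → Y) (V : Set Y) : MaxInv f V ⊆ V :=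
  sUnion_subset fun _ hS => hS.1

lemma subset_maxInv {S V : Set Y} (hSV : S ⊆ V) (hS : f '' S = S) : S ⊆ MaxInv f V :=
  subset_sUnion_of_mem ⟨hSV, hS⟩

lemma image_maxInv (f : Y → Y) (V : Set Y) : f '' MaxInv f V = MaxInv f V := by
  rw [MaxInv, sUnion_eq_biUnion, image_iUnion₂]
  exact iUnion₂_congr fun _ hS => hS.2

lemma iterate_mem_of_mem_maxInvPlus {V : Set Y} {x : Y} (hx : x ∈ MaxInvPlus f V) (k : ℕ) :
    f^[k] x ∈ V := by
  obtain ⟨S, ⟨hSV, hS⟩, hxS⟩ := hx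
  exact hSV ((mapsTo_iff_image_subset.2 hS).iterate k hxS)

lemma IsBackwardOrbit.iterate_apply {γ : ℕ → Y} (hγ : IsBackwardOrbit f γ) (m k : ℕ) :
    f^[m] (γ (k + m)) = γ k := by
  induction m with
  | zero => rfl
  | succ m ih => rw [iterate_succ_apply, ← add_assoc, hγ, ih]

lemma exists_backwardOrbit_of_mem_maxInv {V : Set Y} {x : Y} (hx : x ∈ MaxInv f V) :
    ∃ γ : ℕ → Y, γ 0 = x ∧ IsBackwardOrbit f γ ∧ ∀ m, γ m ∈ V := by
  have hpre : ∀ y : MaxInv f V, ∃ z : MaxInv f V, f z = y := by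
    rintro ⟨y, hy⟩
    obtain ⟨z, hz, rfl⟩ := (image_maxInv f V).symm.subset hy
    exact ⟨⟨z, hz⟩, rfl⟩
  choose g hg using hpre
  exact ⟨fun m => g^[m] ⟨x, hx⟩, rfl, fun k => by simp only [iterate_succ_apply', hg],
    fun m => maxInv_subset f V (g^[m] ⟨x, hx⟩).2⟩

/-- The backward orbit `γ` and the forward orbit of `γ 0` together form a full orbit `ℤ → Y`,
whose range is invariant since `· + 1` is a bijection of `ℤ`. -/
lemma mem_maxInv_of_isBackwardOrbit {V : Set Y} {γ : ℕ → Y} (hγ : IsBackwardOrbit f γ)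
    (hγV : ∀ m, γ m ∈ V) (hfV : ∀ k, f^[k] (γ 0) ∈ V) : γ 0 ∈ MaxInv f V := by
  let φ : ℤ → Y := fun
    | .ofNat k => f^[k] (γ 0)
    | .negSucc k => γ (k + 1)
  have hφ : f ∘ φ = φ ∘ (· + 1) := by
    funext n
    rcases n with k | _ | k
    · exact (iterate_succ_apply' f k _).symm
    · exact hγ 0
    · exact hγ (k + 1)
  refine subset_maxInv (S := range φ) ?_ ?_ ⟨0, rfl⟩
  · rintro _ ⟨k | k, rfl⟩
    exacts [hfV k, hγV (k + 1)]
  · rw [← range_comp, hφ]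
    exact (add_right_surjective 1).range_comp φ

end Invariant

section OrbAlpha

variable {Y : Type*} [TopologicalSpace Y] {γ : ℕ → Y}

lemma mem_orbAlpha_iff {y : Y} : y ∈ OrbAlpha γ ↔ MapClusterPt y atTop γ := by
  rw [mapClusterPt_atTop_iff_forall_mem_closure]
  exact mem_iInter

lemma orbAlpha_nonempty [CompactSpace Y] (γ : ℕ → Y) : (OrbAlpha γ).Nonempty :=
  let ⟨y, hy⟩ := exists_clusterPt_of_compactSpace (map γ atTop)
  ⟨y, mem_orbAlpha_iff.2 hy⟩

lemma orbAlpha_subset {s : Set Y} (hs : IsClosed s) (h : ∀ᶠ m in atTop, γ m ∈ s) :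
    OrbAlpha γ ⊆ s :=
  fun _ hy => hs.mem_of_mapClusterPt (mem_orbAlpha_iff.1 hy) h

lemma IsBackwardOrbit.image_orbAlpha_subset {f : Y → Y} (hf : Continuous f)
    (hγ : IsBackwardOrbit f γ) : f '' OrbAlpha γ ⊆ OrbAlpha γ := by
  rintro _ ⟨y, hy, rfl⟩
  have hshift : f ∘ γ =ᶠ[atTop] γ ∘ (· - 1) := eventually_atTop.2 ⟨1, fun m hm => by
    obtain ⟨k, rfl⟩ := Nat.exists_eq_add_of_le' hm
    simpa using hγ k⟩
  have hfy := (mem_orbAlpha_iff.1 hy).continuousAt_comp hf.continuousAt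
  exact mem_orbAlpha_iff.2 ((hshift.mapClusterPt_iff.1 hfy).of_comp (tendsto_sub_atTop_nat 1))

end OrbAlpha

namespace IsRepellingRegion

variable {Y : Type*} [TopologicalSpace Y] {f : Y → Y} {U : Set Y}

lemma mem_of_iterate_mem (hU : IsRepellingRegion f U) {y : Y} {j : ℕ} (h : f^[j] y ∈ U) :
    y ∈ U := by
  by_contra hy
  exact MapsTo.iterate (s := Uᶜ) (fun _ hz hfz => hz (hU.1 hfz)) j hy h

lemma maxInvPlus_subset_interior (hU : IsRepellingRegion f U) :
    MaxInvPlus f U ⊆ interior U := by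
  obtain ⟨-, n, -, hn⟩ := hU
  exact fun y hy => hn (subset_closure (iterate_mem_of_mem_maxInvPlus hy n))

lemma subset_maxInvPlus_of_subset_closure (hU : IsRepellingRegion f U) {S : Set Y}
    (hS : f '' S ⊆ S) (hSU : S ⊆ closure U) : S ⊆ MaxInvPlus f U := by
  obtain ⟨-, n, -, hn⟩ := hU
  refine subset_sUnion_of_mem ⟨fun y hy => interior_subset (hn ?_), hS⟩
  exact hSU ((mapsTo_iff_image_subset.2 hS).iterate n hy)

lemma subset_compl_of_image_eq (hU : IsRepellingRegion f U) {S : Set Y} (hS : f '' S = S)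
    (hSU : S ⊆ closure Uᶜ) : S ⊆ Uᶜ := by
  obtain ⟨-, n, -, hn⟩ := hU
  rintro _ hy hyU
  obtain ⟨z, hz, rfl⟩ := (IsFixedPt.image_iterate hS n).symm.subset hy
  rw [closure_compl] at hSU
  exact hSU hz (hn (subset_closure hyU))

lemma orbAlpha_subset_maxInvPlus (hU : IsRepellingRegion f U) (hf : Continuous f) {γ : ℕ → Y}
    (hγ : IsBackwardOrbit f γ) {k : ℕ} (hk : γ k ∈ U) : OrbAlpha γ ⊆ MaxInvPlus f U := by
  have htail : ∀ᶠ m in atTop, γ m ∈ closure U := eventually_atTop.2 ⟨k, fun m hm => by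
    obtain ⟨j, rfl⟩ := Nat.exists_eq_add_of_le hm
    exact subset_closure (hU.mem_of_iterate_mem (j := j) (by rwa [hγ.iterate_apply]))⟩
  exact hU.subset_maxInvPlus_of_subset_closure (hγ.image_orbAlpha_subset hf)
    (orbAlpha_subset isClosed_closure htail)

lemma maxInv_compl_subset_dualAttractor (hU : IsRepellingRegion f U) :
    MaxInv f Uᶜ ⊆ DualAttractor f (MaxInvPlus f U) := by
  intro x hx
  obtain ⟨γ, rfl, hγ, hγU⟩ := exists_backwardOrbit_of_mem_maxInv hx
  have hα : OrbAlpha γ ⊆ (interior U)ᶜ := closure_compl (s := U) ▸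
    orbAlpha_subset isClosed_closure (Eventually.of_forall fun m => subset_closure (hγU m))
  exact ⟨γ, rfl, hγ, eq_empty_of_forall_notMem fun y hy =>
    hα hy.1 (hU.maxInvPlus_subset_interior hy.2)⟩

lemma dualAttractor_subset_maxInv_compl [CompactSpace Y] (hU : IsRepellingRegion f U)
    (hf : Continuous f) : DualAttractor f (MaxInvPlus f U) ⊆ MaxInv f Uᶜ := by
  rintro _ ⟨γ, rfl, hγ, hdisj⟩
  have hγU : ∀ m, γ m ∉ U := fun m hm => by
    obtain ⟨y, hy⟩ := orbAlpha_nonempty γ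
    exact eq_empty_iff_forall_notMem.1 hdisj y ⟨hy, hU.orbAlpha_subset_maxInvPlus hf hγ hm hy⟩
  exact mem_maxInv_of_isBackwardOrbit hγ hγU fun k hk => hγU 0 (hU.mem_of_iterate_mem hk)

lemma maxInv_compl_eq_dualAttractor [CompactSpace Y] (hU : IsRepellingRegion f U)
    (hf : Continuous f) : MaxInv f Uᶜ = DualAttractor f (MaxInvPlus f U) :=
  hU.maxInv_compl_subset_dualAttractor.antisymm (hU.dualAttractor_subset_maxInv_compl hf)

lemma isClosed_maxInv_compl [CompactSpace Y] [T2Space Y] (hU : IsRepellingRegion f U)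
    (hf : Continuous f) : IsClosed (MaxInv f Uᶜ) := by
  have hinv : f '' closure (MaxInv f Uᶜ) = closure (MaxInv f Uᶜ) := by
    rw [image_closure_of_isCompact isClosed_closure.isCompact hf.continuousOn, image_maxInv]
  have hsub : closure (MaxInv f Uᶜ) ⊆ Uᶜ :=
    hU.subset_compl_of_image_eq hinv (closure_mono (maxInv_subset f Uᶜ))
  exact closure_subset_iff_isClosed.1 (subset_maxInv hsub hinv)

end IsRepellingRegion

/-- Properties of the dual attractor `Inv(X \ U)` of a repeller. -/
theorem dual_attractor_properties
    {X : Type*} [MetricSpace X] [CompactSpace X]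
    (f : X → X) (hf : Continuous f) (U R : Set X)
    (hU : IsRepellingRegion f U) (hR : R = MaxInvPlus f U) :
    MaxInv f Uᶜ = DualAttractor f R ∧
    IsCompact (MaxInv f Uᶜ) ∧
    f '' MaxInv f Uᶜ = MaxInv f Uᶜ ∧
    (∀ U' : Set X, IsRepellingRegion f U' → R = MaxInvPlus f U' →
      MaxInv f U'ᶜ = MaxInv f Uᶜ) := by
  subst hR
  refine ⟨hU.maxInv_compl_eq_dualAttractor hf, (hU.isClosed_maxInv_compl hf).isCompact,
    image_maxInv f Uᶜ, fun U' hU' hR' => ?_⟩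
  rw [hU'.maxInv_compl_eq_dualAttractor hf, hU.maxInv_compl_eq_dualAttractor hf, hR']
end
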